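/- The edge clique cover number of the icosahedron graph equals 12. -/

import Mathlib

/-!
The icosahedron contains no `K₄`, so a clique of an edge clique cover is at most a triangle and
covers at most two of the five edges at any of its vertices. Hence every vertex lies in at least
`⌈5 / 2⌉ = 3` cliques of the cover, and counting vertex–clique incidences gives
`12 * 3 ≤ 3 * n` for a cover by `n` cliques. Twelve triangles, three at each vertex, do suffice.
-/

open SimpleGraph

/-- The competition graph of a digraph `D` (given as a relation): distinct vertices
`x`, `y` are adjacent iff they have a common out-neighbor in `D`. -/
def CompetitionGraph {V : Type*} (D : V → V → Prop) : SimpleGraph V where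
  Adj x y := x ≠ y ∧ ∃ v, D x v ∧ D y v
  symm := by constructor; rintro x y ⟨h, v, hx, hy⟩; exact ⟨h.symm, v, hy, hx⟩
  loopless := by constructor; rintro x ⟨h, -⟩; exact h rfl

/-- A digraph is acyclic iff it has no directed cycle, i.e. no vertex reaches itself
by a nonempty directed walk. -/
def DigraphAcyclic {V : Type*} (D : V → V → Prop) : Prop :=
  ∀ v, ¬ Relation.TransGen D v v

/-- The graph `G` together with `k` additional isolated vertices. -/
def addIsolated {V : Type*} (G : SimpleGraph V) (k : ℕ) : SimpleGraph (V ⊕ Fin k) where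
  Adj a b := ∃ x y, a = Sum.inl x ∧ b = Sum.inl y ∧ G.Adj x y
  symm := by constructor; rintro a b ⟨x, y, rfl, rfl, h⟩; exact ⟨y, x, rfl, rfl, h.symm⟩
  loopless := by
    constructor
    rintro a ⟨x, y, rfl, hy, h⟩
    obtain rfl := Sum.inl_injective hy
    exact G.irrefl h

/-- `G` plus `k` isolated vertices is the competition graph of some acyclic digraph. -/
def IsCompetitionWitness {V : Type*} (G : SimpleGraph V) (k : ℕ) : Prop :=
  ∃ D : (V ⊕ Fin k) → (V ⊕ Fin k) → Prop,
    DigraphAcyclic D ∧ CompetitionGraph D = addIsolated G k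

/-- The competition number of `G`: the least `k` such that `G` plus `k` isolated
vertices is the competition graph of an acyclic digraph. -/
noncomputable def compNum {V : Type*} (G : SimpleGraph V) : ℕ :=
  sInf {k | IsCompetitionWitness G k}

/-- The generalized edge clique cover number `θ_E(F; H)`: the minimum number of cliques
of `G` contained in the vertex set `H` (i.e. cliques of the induced subgraph on `H`)
needed so that every edge in `F` has both endpoints in some clique of the family. -/
noncomputable def thetaEOn {V : Type*} (G : SimpleGraph V) (F : Set (Sym2 V)) (H : Set V) : ℕ :=
  sInf {n | ∃ f : Fin n → Set V,
    (∀ i, f i ⊆ H ∧ G.IsClique (f i)) ∧ ∀ e ∈ F, ∃ i, ∀ x ∈ e, x ∈ f i}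

/-- The edge clique cover number `θ_E(G)`. -/
noncomputable def thetaE {V : Type*} (G : SimpleGraph V) : ℕ :=
  thetaEOn G G.edgeSet Set.univ

/-- The vertex clique cover number of the subgraph of `G` induced on `S`: the minimum
number of cliques of `G` contained in `S` whose union covers `S`. -/
noncomputable def thetaVOn {V : Type*} (G : SimpleGraph V) (S : Set V) : ℕ :=
  sInf {n | ∃ f : Fin n → Set V,
    (∀ i, f i ⊆ S ∧ G.IsClique (f i)) ∧ ∀ v ∈ S, ∃ i, v ∈ f i}

/-- The closed neighborhood `N_G[U]` of a vertex subset. -/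
def closedNbhd {V : Type*} (G : SimpleGraph V) (U : Set V) : Set V :=
  U ∪ {v | ∃ u ∈ U, G.Adj u v}

/-- The set `E_G[U]` of edges of `G` with at least one endpoint in `U`. -/
def incidentEdges {V : Type*} (G : SimpleGraph V) (U : Set V) : Set (Sym2 V) :=
  {e | e ∈ G.edgeSet ∧ ∃ x ∈ e, x ∈ U}

/-- The edge list of the icosahedron graph (pentagonal antiprism on `1..10` together
with apexes `0` and `11`). -/
def icosaEdges : List (ℕ × ℕ) :=
  [(0,1),(0,2),(0,3),(0,4),(0,5),(1,2),(2,3),(3,4),(4,5),(5,1),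
   (11,6),(11,7),(11,8),(11,9),(11,10),(6,7),(7,8),(8,9),(9,10),(10,6),
   (1,6),(1,7),(2,7),(2,8),(3,8),(3,9),(4,9),(4,10),(5,10),(5,6)]

/-- The icosahedron graph: the 5-regular graph on 12 vertices with 30 edges
arising as the 1-skeleton of the icosahedron. -/
def Icosahedron : SimpleGraph (Fin 12) :=
  SimpleGraph.fromRel (fun i j => ((i : ℕ), (j : ℕ)) ∈ icosaEdges)

open Finset

namespace SimpleGraph

variable {V ι : Type*} {G : SimpleGraph V}

def IsEdgeCliqueCover (G : SimpleGraph V) (f : ι → Set V) : Prop :=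
  (∀ i, G.IsClique (f i)) ∧ ∀ ⦃x y⦄, G.Adj x y → ∃ i, x ∈ f i ∧ y ∈ f i

theorem thetaE_eq_sInf :
    thetaE G = sInf {n | ∃ f : Fin n → Set V, G.IsEdgeCliqueCover f} := by
  refine congrArg sInf (Set.ext fun n => exists_congr fun f => ?_)
  refine and_congr (by simp) ⟨fun h x y hxy => ?_, fun h e he => ?_⟩
  · obtain ⟨i, hi⟩ := h s(x, y) hxy
    exact ⟨i, hi x (Sym2.mem_mk_left x y), hi y (Sym2.mem_mk_right x y)⟩
  · induction e using Sym2.ind with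
    | _ x y =>
      obtain ⟨i, hx, hy⟩ := h he
      exact ⟨i, fun z hz => by rcases Sym2.mem_iff.mp hz with rfl | rfl <;> assumption⟩

theorem thetaE_eq_of_isEdgeCliqueCover {m : ℕ} {f : Fin m → Set V} (hf : G.IsEdgeCliqueCover f)
    (hmin : ∀ n (g : Fin n → Set V), G.IsEdgeCliqueCover g → m ≤ n) : thetaE G = m := by
  rw [thetaE_eq_sInf]
  exact le_antisymm (Nat.sInf_le ⟨f, hf⟩) (le_csInf ⟨m, f, hf⟩ fun n ⟨g, hg⟩ => hmin n g hg)

theorem IsClique.card_le_of_cliqueFree {k : ℕ} {s : Finset V} (hG : G.CliqueFree (k + 1))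
    (hs : G.IsClique (s : Set V)) : #s ≤ k := by
  by_contra! hlt
  obtain ⟨t, hts, ht⟩ := s.exists_subset_card_eq hlt
  exact hG t ⟨hs.subset (coe_subset.mpr hts), ht⟩

variable [Fintype V] [DecidableEq V] {f : ι → Set V} [∀ i, DecidablePred (· ∈ f i)] {k : ℕ}

theorem IsEdgeCliqueCover.degree_le_mul_card [Fintype ι] [DecidableRel G.Adj]
    (hG : G.CliqueFree (k + 2)) (hf : G.IsEdgeCliqueCover f) (v : V) :
    G.degree v ≤ k * #{i | v ∈ f i} := by
  have hsub : G.neighborFinset v ⊆ ({i | v ∈ f i} : Finset ι).biUnion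
      fun i => (f i).toFinset.erase v := by
    intro w hw
    have hvw := (G.mem_neighborFinset v w).mp hw
    obtain ⟨i, hvi, hwi⟩ := hf.2 hvw
    exact mem_biUnion.mpr ⟨i, by simpa using hvi, mem_erase.mpr ⟨hvw.ne', by simpa using hwi⟩⟩
  have hclique : ∀ i ∈ ({i | v ∈ f i} : Finset ι), #((f i).toFinset.erase v) ≤ k := by
    intro i hi
    have hcard : #(f i).toFinset ≤ k + 1 :=
      IsClique.card_le_of_cliqueFree hG (by simpa using hf.1 i)
    rw [card_erase_of_mem (by simpa using hi)]
    omega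
  calc G.degree v = #(G.neighborFinset v) := (card_neighborFinset_eq_degree G v).symm
    _ ≤ _ := card_le_card hsub
    _ ≤ #({i | v ∈ f i} : Finset ι) * k := card_biUnion_le_card_mul _ _ _ hclique
    _ = k * #{i | v ∈ f i} := mul_comm _ _

theorem IsEdgeCliqueCover.card_mul_ceilDiv_le [Fintype ι] [DecidableRel G.Adj] {d : ℕ}
    (hG : G.CliqueFree (k + 2)) (hreg : G.IsRegularOfDegree d) (hf : G.IsEdgeCliqueCover f) :
    Fintype.card V * (d ⌈/⌉ k) ≤ Fintype.card ι * (k + 1) := by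
  rcases k.eq_zero_or_pos with rfl | hk
  · simp
  have hmem : ∀ v ∈ (univ : Finset V), d ⌈/⌉ k ≤ #(univ.bipartiteAbove (· ∈ f ·) v) := by
    intro v _
    rw [ceilDiv_le_iff_le_mul hk, ← hreg.degree_eq v]
    simpa [bipartiteAbove] using hf.degree_le_mul_card hG v
  have hclique : ∀ i ∈ (univ : Finset ι), #(univ.bipartiteBelow (· ∈ f ·) i) ≤ k + 1 := by
    intro i _
    exact IsClique.card_le_of_cliqueFree hG (by simpa [bipartiteBelow] using hf.1 i)
  simpa using card_nsmul_le_card_nsmul (· ∈ f ·) hmem hclique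

end SimpleGraph

instance : DecidableRel Icosahedron.Adj :=
  inferInstanceAs (DecidableRel (fromRel fun i j : Fin 12 => ((i : ℕ), (j : ℕ)) ∈ icosaEdges).Adj)

def icosahedronTriangles : Fin 12 → Finset (Fin 12) :=
  ![{0,1,2},{0,1,5},{0,3,4},{1,6,7},{2,3,8},{2,7,8},
    {3,4,9},{4,5,10},{5,6,10},{6,7,11},{8,9,11},{9,10,11}]

theorem icosahedron_isEdgeCliqueCover_triangles :
    Icosahedron.IsEdgeCliqueCover fun i => (icosahedronTriangles i : Set (Fin 12)) := by
  refine ⟨fun i => ?_, fun x y hxy => ?_⟩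
  · revert i
    show ∀ i, Icosahedron.IsClique (icosahedronTriangles i : Set (Fin 12))
    decide
  · simpa using (by decide : ∀ x y : Fin 12, Icosahedron.Adj x y →
      ∃ i, x ∈ icosahedronTriangles i ∧ y ∈ icosahedronTriangles i) x y hxy

theorem icosahedron_isRegularOfDegree : Icosahedron.IsRegularOfDegree 5 := by
  show ∀ v, Icosahedron.degree v = 5
  decide

theorem icosahedron_cliqueFree : Icosahedron.CliqueFree 4 := by
  have hK4 : ∀ a b c d : Fin 12, Icosahedron.Adj b c → Icosahedron.Adj b d → Icosahedron.Adj c d →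
      ¬(Icosahedron.Adj a b ∧ Icosahedron.Adj a c ∧ Icosahedron.Adj a d) := by
    decide
  intro s hs
  obtain ⟨a, ha⟩ := s.card_pos.mp (by rw [hs.card_eq]; norm_num)
  obtain ⟨b, c, d, hbc, hbd, hcd, hbcd⟩ := is3Clique_iff.mp (hs.erase_of_mem ha)
  have hadj : ∀ x ∈ s.erase a, Icosahedron.Adj a x := fun x hx =>
    hs.isClique (mem_coe.mpr ha) (mem_coe.mpr (mem_of_mem_erase hx)) (ne_of_mem_erase hx).symm
  rw [hbcd] at hadj
  exact hK4 a b c d hbc hbd hcd ⟨hadj b (by simp), hadj c (by simp), hadj d (by simp)⟩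

theorem edge_clique_cover_number_icosahedron :
    thetaE Icosahedron = 12 := by
  classical
  refine thetaE_eq_of_isEdgeCliqueCover icosahedron_isEdgeCliqueCover_triangles fun n f hf => ?_
  have := hf.card_mul_ceilDiv_le icosahedron_cliqueFree icosahedron_isRegularOfDegree
  rw [Fintype.card_fin, Fintype.card_fin, Nat.ceilDiv_eq_add_pred_div] at this
  omega
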